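/- If the pair (F^a, F^b) is REPC, then the pair (F^a, F^b) is REPMC (Robustly Equilibrium-Preserving Multistep Consistent). In particular, one can take T* := min{T^i, ρ^{-1}(η/(e^{KT}·T)), ρ^{-1}(1/(e^{KT}·T))} and α(δ,T) := (1+KT)δ + Tρ(T)(M + φ(E)), where K, T^i, ρ, φ come from the REPC property, and then the k-fold iterate α^k(0,{T_i}) is bounded by ηM + φ(E) whenever ∑_{i=0}^{k−1} T_i ≤ T and each T_i ∈ (0,T*). -/

import Mathlib

open scoped BigOperators NNReal

noncomputable section

/-- Class `K∞` function: continuous, strictly increasing and unbounded on `[0,∞)`, vanishing at 0. -/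
def IsKInf (φ : ℝ → ℝ) : Prop :=
  ContinuousOn φ (Set.Ici 0) ∧ StrictMonoOn φ (Set.Ici 0) ∧ φ 0 = 0 ∧
    ∀ c : ℝ, ∃ x : ℝ, 0 ≤ x ∧ c < φ x

/-- Discrete-time trajectory of the closed-loop model `x_{k+1} = F (x_k) (e_k) (T_k)`. -/
def traj {E D : Type*} (F : E → D → ℝ → E) (ξ : E) (es : ℕ → D) (Ts : ℕ → ℝ) : ℕ → E
  | 0 => ξ
  | k + 1 => F (traj F ξ es Ts k) (es k) (Ts k)

/-- `sup_{0 ≤ i ≤ k-1} ‖e_i‖` with the convention that it is `0` for `k = 0`. -/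
def supN {D : Type*} [NormedAddCommGroup D] (es : ℕ → D) (k : ℕ) : ℝ :=
  (((Finset.range k).sup fun i => ‖es i‖₊ : ℝ≥0) : ℝ)

/-- Robust Equilibrium-Preserving Consistency (REPC) of the model `Fa` with the model `Fb`. -/
def REPC {E D : Type*} [NormedAddCommGroup E] [NormedAddCommGroup D]
    (Fa Fb : E → D → ℝ → E) : Prop :=
  ∃ φ : ℝ → ℝ, IsKInf φ ∧
    ∀ M Eb : ℝ, 0 ≤ M → 0 ≤ Eb →
      ∃ K : ℝ, 0 < K ∧ ∃ Tstar : ℝ, 0 < Tstar ∧ ∃ ρ : ℝ → ℝ, IsKInf ρ ∧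
        ∀ (xa xb : E) (e : D) (T : ℝ), ‖xa‖ ≤ M → ‖xb‖ ≤ M → ‖e‖ ≤ Eb →
          0 < T → T < Tstar →
          ‖Fa xa e T - Fb xb e T‖ ≤
            (1 + K * T) * ‖xa - xb‖ + T * ρ T * (max ‖xa‖ ‖xb‖ + φ ‖e‖)

/-- The `k`-fold iterate `α^k(0,{T_i})`. -/
def alphaIter (α : ENNReal → ℝ → ENNReal) (Ts : ℕ → ℝ) : ℕ → ENNReal
  | 0 => 0
  | k + 1 => α (alphaIter α Ts k) (Ts k)

/-- Robust Equilibrium-Preserving Multistep Consistency (REPMC) of `Fa` with `Fb`,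
with a fixed class-`K∞` function `φ`. -/
def REPMCWith {E D : Type*} [NormedAddCommGroup E] [NormedAddCommGroup D]
    (Fa Fb : E → D → ℝ → E) (φ : ℝ → ℝ) : Prop :=
  ∀ M Eb 𝒯 η : ℝ, 0 ≤ M → 0 ≤ Eb → 0 < 𝒯 → 0 < η →
    ∃ Tstar : ℝ, 0 < Tstar ∧ ∃ α : ENNReal → ℝ → ENNReal,
      (∀ T : ℝ, 0 ≤ T → T < Tstar → Monotone (fun δ => α δ T)) ∧
      (∀ (xa xb : E) (e : D) (T δ : ℝ), ‖xa‖ ≤ M → ‖xb‖ ≤ M → ‖e‖ ≤ Eb →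
        0 < T → T < Tstar → ‖xa - xb‖ ≤ δ →
        ENNReal.ofReal ‖Fa xa e T - Fb xb e T‖ ≤ α (ENNReal.ofReal δ) T) ∧
      (∀ Ts : ℕ → ℝ, (∀ i, 0 < Ts i ∧ Ts i < Tstar) →
        ∀ k : ℕ, (∑ i ∈ Finset.range k, Ts i) ≤ 𝒯 →
          alphaIter α Ts k ≤ ENNReal.ofReal (η * M + φ Eb))

/-- REPMC: existence of a suitable `φ ∈ K∞`. -/
def REPMC {E D : Type*} [NormedAddCommGroup E] [NormedAddCommGroup D]
    (Fa Fb : E → D → ℝ → E) : Prop :=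
  ∃ φ : ℝ → ℝ, IsKInf φ ∧ REPMCWith Fa Fb φ

/-- Semiglobal exponential ISS under varying sampling rate, with constants `K ≥ 1`, `λ > 0`
and gain `γ ∈ K∞`. -/
def SEISSVSR {E D : Type*} [NormedAddCommGroup E] [NormedAddCommGroup D]
    (F : E → D → ℝ → E) (K lam : ℝ) (γ : ℝ → ℝ) : Prop :=
  ∀ M Eb : ℝ, 0 ≤ M → 0 ≤ Eb → ∃ Tstar : ℝ, 0 < Tstar ∧
    ∀ (ξ : E) (es : ℕ → D) (Ts : ℕ → ℝ),
      ‖ξ‖ ≤ M → (∀ i, ‖es i‖ ≤ Eb) → (∀ i, 0 < Ts i ∧ Ts i < Tstar) →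
      ∀ k : ℕ, ‖traj F ξ es Ts k‖ ≤
        K * ‖ξ‖ * Real.exp (-lam * ∑ i ∈ Finset.range k, Ts i) + γ (supN es k)

/-- Class `KL` function. -/
def IsKL (β : ℝ → ℝ → ℝ) : Prop :=
  (∀ t : ℝ, 0 ≤ t → ContinuousOn (fun s => β s t) (Set.Ici 0) ∧
    StrictMonoOn (fun s => β s t) (Set.Ici 0) ∧ β 0 t = 0) ∧
  (∀ s : ℝ, 0 ≤ s → StrictAntiOn (fun t => β s t) (Set.Ici 0) ∧
    Filter.Tendsto (fun t => β s t) Filter.atTop (nhds 0))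

/-!
Along a sampling sequence with partial sums `S_k`, the REPC estimate makes the multistep error
bound `α` an affine recursion `a_{k+1} = (1 + K T_k) a_k + T_k ρ(T_k) (M + φ(E))`, which solves
to `a_k ≤ e^{K S_k} S_k · sup ρ(T_i) (M + φ(E))`. Over a horizon `S_k ≤ 𝒯` this is at most
`ηM + φ(E)` as soon as `ρ` is below `min η 1 / (e^{K𝒯} 𝒯)` on `(0, T*)`, which continuity of
`ρ` at `0` provides.
-/

theorem IsKInf.nonneg {φ : ℝ → ℝ} (hφ : IsKInf φ) {x : ℝ} (hx : 0 ≤ x) : 0 ≤ φ x := by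
  simpa [hφ.2.2.1] using hφ.2.1.monotoneOn Set.self_mem_Ici hx hx

theorem IsKInf.le_of_le {φ : ℝ → ℝ} (hφ : IsKInf φ) {x y : ℝ} (hx : 0 ≤ x) (hxy : x ≤ y) :
    φ x ≤ φ y :=
  hφ.2.1.monotoneOn hx (hx.trans hxy) hxy

theorem IsKInf.exists_forall_lt {ρ : ℝ → ℝ} (hρ : IsKInf ρ) {c : ℝ} (hc : 0 < c) :
    ∃ ε > 0, ∀ T, 0 ≤ T → T < ε → ρ T < c := by
  obtain ⟨ε, hε, hρε⟩ := Metric.continuousWithinAt_iff.1 (hρ.1 0 Set.self_mem_Ici) c hc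
  refine ⟨ε, hε, fun T hT hTε => ?_⟩
  have hdist : dist (ρ T) (ρ 0) < c := hρε hT (by rwa [Real.dist_0_eq_abs, abs_of_nonneg hT])
  rw [hρ.2.2.1, Real.dist_0_eq_abs] at hdist
  exact (le_abs_self _).trans_lt hdist

def affineStep (K : ℝ) (r : ℝ → ℝ) (δ : ENNReal) (T : ℝ) : ENNReal :=
  ENNReal.ofReal (1 + K * T) * δ + ENNReal.ofReal (T * r T)

theorem monotone_affineStep (K : ℝ) (r : ℝ → ℝ) (T : ℝ) :
    Monotone fun δ => affineStep K r δ T :=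
  fun _ _ hδ => add_le_add_left (mul_le_mul_right hδ _) _

theorem ofReal_le_affineStep {K T d δ a b C : ℝ} {ρ : ℝ → ℝ} (hK : 0 ≤ K) (hT : 0 ≤ T)
    (hρT : 0 ≤ ρ T) (hd : d ≤ δ) (hb : b ≤ C)
    (ha : a ≤ (1 + K * T) * d + T * ρ T * b) :
    ENNReal.ofReal a ≤ affineStep K (fun T => ρ T * C) (ENNReal.ofReal δ) T := by
  have hKT : 0 ≤ 1 + K * T := by positivity
  have hbound : a ≤ (1 + K * T) * δ + T * (ρ T * C) := by
    rw [← mul_assoc]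
    nlinarith [mul_le_mul_of_nonneg_left hd hKT, mul_le_mul_of_nonneg_left hb (mul_nonneg hT hρT)]
  calc ENNReal.ofReal a ≤ ENNReal.ofReal ((1 + K * T) * δ + T * (ρ T * C)) :=
        ENNReal.ofReal_le_ofReal hbound
    _ ≤ ENNReal.ofReal ((1 + K * T) * δ) + ENNReal.ofReal (T * (ρ T * C)) :=
        ENNReal.ofReal_add_le
    _ = affineStep K (fun T => ρ T * C) (ENNReal.ofReal δ) T := by
        rw [affineStep, ENNReal.ofReal_mul hKT]

theorem one_add_mul_mul_add_le_exp {K B s t : ℝ} (hK : 0 ≤ K) (hB : 0 ≤ B) (hs : 0 ≤ s)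
    (ht : 0 ≤ t) :
    (1 + K * t) * (Real.exp (K * s) * B * s) + t * B ≤
      Real.exp (K * (s + t)) * B * (s + t) := by
  have hgrowth : (1 + K * t) * Real.exp (K * s) ≤ Real.exp (K * (s + t)) := by
    rw [mul_add, Real.exp_add, mul_comm]
    gcongr
    linarith [Real.add_one_le_exp (K * t)]
  have hone : 1 ≤ Real.exp (K * (s + t)) := Real.one_le_exp (by positivity)
  nlinarith [mul_le_mul_of_nonneg_right hgrowth (mul_nonneg hB hs),
    mul_le_mul_of_nonneg_right hone (mul_nonneg ht hB)]

theorem alphaIter_affineStep_le {K B : ℝ} {r : ℝ → ℝ} {Ts : ℕ → ℝ} (hK : 0 ≤ K) (hB : 0 ≤ B)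
    (hTs : ∀ i, 0 ≤ Ts i) (hr : ∀ i, r (Ts i) ≤ B) (k : ℕ) :
    alphaIter (affineStep K r) Ts k ≤
      ENNReal.ofReal (Real.exp (K * ∑ i ∈ Finset.range k, Ts i) * B *
        ∑ i ∈ Finset.range k, Ts i) := by
  induction k with
  | zero => simp [alphaIter]
  | succ k ih =>
    set s := ∑ i ∈ Finset.range k, Ts i
    have hs : 0 ≤ s := Finset.sum_nonneg fun i _ => hTs i
    have hKT : 0 ≤ 1 + K * Ts k := by have := hTs k; positivity
    calc alphaIter (affineStep K r) Ts (k + 1)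
        ≤ ENNReal.ofReal (1 + K * Ts k) * ENNReal.ofReal (Real.exp (K * s) * B * s) +
            ENNReal.ofReal (Ts k * B) :=
          add_le_add (mul_le_mul_right ih _)
            (ENNReal.ofReal_le_ofReal (mul_le_mul_of_nonneg_left (hr k) (hTs k)))
      _ = ENNReal.ofReal ((1 + K * Ts k) * (Real.exp (K * s) * B * s) + Ts k * B) := by
          rw [ENNReal.ofReal_add (by positivity) (mul_nonneg (hTs k) hB),
            ENNReal.ofReal_mul hKT]
      _ ≤ _ := by
          rw [Finset.sum_range_succ]
          exact ENNReal.ofReal_le_ofReal (one_add_mul_mul_add_le_exp hK hB hs (hTs k))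

theorem exp_mul_mul_le_of_le_horizon {K S 𝒯 η M Φ : ℝ} (hK : 0 ≤ K) (hS : 0 ≤ S)
    (hS𝒯 : S ≤ 𝒯) (h𝒯 : 0 < 𝒯) (hη : 0 ≤ η) (hM : 0 ≤ M) (hΦ : 0 ≤ Φ) :
    Real.exp (K * S) * (min η 1 / (Real.exp (K * 𝒯) * 𝒯) * (M + Φ)) * S ≤ η * M + Φ := by
  have hexp : Real.exp (K * S) * S ≤ Real.exp (K * 𝒯) * 𝒯 :=
    mul_le_mul (Real.exp_le_exp.2 (by gcongr)) hS𝒯 hS (Real.exp_pos _).le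
  have hmin : min η 1 * (M + Φ) ≤ η * M + Φ := by
    nlinarith [min_le_left η 1, min_le_right η 1]
  calc Real.exp (K * S) * (min η 1 / (Real.exp (K * 𝒯) * 𝒯) * (M + Φ)) * S
      = Real.exp (K * S) * S * (min η 1 / (Real.exp (K * 𝒯) * 𝒯)) * (M + Φ) := by ring
    _ ≤ Real.exp (K * 𝒯) * 𝒯 * (min η 1 / (Real.exp (K * 𝒯) * 𝒯)) * (M + Φ) := by
        gcongr
    _ = min η 1 * (M + Φ) := by field_simp
    _ ≤ η * M + Φ := hmin

theorem stmt1 {n q : ℕ}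
    (Fa Fb : EuclideanSpace ℝ (Fin n) → EuclideanSpace ℝ (Fin q) → ℝ →
      EuclideanSpace ℝ (Fin n))
    (hab : REPC Fa Fb) : REPMC Fa Fb := by
  obtain ⟨φ, hφ, hrepc⟩ := hab
  refine ⟨φ, hφ, fun M Eb 𝒯 η hM hEb h𝒯 hη => ?_⟩
  obtain ⟨K, hK, T₀, hT₀, ρ, hρ, hbound⟩ := hrepc M Eb hM hEb
  set c := min η 1 / (Real.exp (K * 𝒯) * 𝒯)
  have hc : 0 < c := div_pos (lt_min hη one_pos) (by positivity)
  obtain ⟨ε, hε, hρε⟩ := hρ.exists_forall_lt hc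
  refine ⟨min T₀ ε, lt_min hT₀ hε, affineStep K (fun T => ρ T * (M + φ Eb)),
    fun T _ _ => monotone_affineStep _ _ T, ?_, ?_⟩
  · intro xa xb e T δ hxa hxb he hT hTlt hδ
    exact ofReal_le_affineStep hK.le hT.le (hρ.nonneg hT.le) hδ
      (add_le_add (max_le hxa hxb) (hφ.le_of_le (norm_nonneg e) he))
      (hbound xa xb e T hxa hxb he hT (hTlt.trans_le (min_le_left _ _)))
  · intro Ts hTs k hsum
    have hMφ : 0 ≤ M + φ Eb := add_nonneg hM (hφ.nonneg hEb)
    have hρTs : ∀ i, ρ (Ts i) * (M + φ Eb) ≤ c * (M + φ Eb) := fun i =>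
      mul_le_mul_of_nonneg_right
        (hρε _ (hTs i).1.le ((hTs i).2.trans_le (min_le_right _ _))).le hMφ
    refine (alphaIter_affineStep_le hK.le (mul_nonneg hc.le hMφ) (fun i => (hTs i).1.le)
      hρTs k).trans (ENNReal.ofReal_le_ofReal ?_)
    exact exp_mul_mul_le_of_le_horizon hK.le (Finset.sum_nonneg fun i _ => (hTs i).1.le) hsum
      h𝒯 hη.le hM (hφ.nonneg hEb)
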